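/- Let X be a finite set. Every commutative nilpotent subsemigroup of T(X) of maximum possible cardinality (among all commutative nilpotent subsemigroups of T(X)) is a null semigroup, i.e., satisfies S² = {e} where e is its zero. -/

import Mathlib

/-!
Let `A` be the union of the images of the members of `S` and `R` its complement. Since `S` is
commutative and nilpotent, a member of `S` is determined by its restriction to `R`, so
`|S| ≤ |A| ^ |R| ≤ ξ(n)`. The null semigroups of all maps that send `X` into a `t`-set `Y` and
collapse `Y` to a point have `t ^ (n - t)` elements, so a maximum `S` has `|S| = ξ(n) = |A| ^ |R|`
and every map `R → A` is the restriction of a member of `S`. When `|R| ≥ 2`, playing such members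
off against each other through commutativity shows that every `γ ∈ S` agrees with the zero `e`
on `A`, which is `S² = {e}`. When `|R| ≤ 1`, maximality leaves `|S| ≤ 2`, and a nilpotent
semigroup with at most two elements is null.
-/

/-- `S` is a subsemigroup of the full transformation semigroup on `X`
(maps act on the right, so the product `β·γ` is `γ ∘ β`). -/
def IsTransSub {X : Type*} (S : Set (X → X)) : Prop :=
  ∀ β ∈ S, ∀ γ ∈ S, (γ ∘ β) ∈ S

/-- `e` is a zero element of `S`: `βe = eβ = e` for all `β ∈ S`. -/
def IsZeroElem {X : Type*} (S : Set (X → X)) (e : X → X) : Prop :=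
  e ∈ S ∧ ∀ β ∈ S, e ∘ β = e ∧ β ∘ e = e

/-- `S` is nilpotent with zero `e`: some `m ≥ 1` such that every product of
`m` elements of `S` equals `e`. -/
def IsNilpotentSub {X : Type*} (S : Set (X → X)) (e : X → X) : Prop :=
  ∃ m : ℕ, 0 < m ∧ ∀ L : List (X → X), L.length = m → (∀ f ∈ L, f ∈ S) →
    L.foldr (· ∘ ·) id = e

/-- `S` is commutative. -/
def IsCommSub {X : Type*} (S : Set (X → X)) : Prop :=
  ∀ β ∈ S, ∀ γ ∈ S, β ∘ γ = γ ∘ β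

/-- `S` is a null semigroup with zero `e`: every product of two elements is `e`. -/
def IsNullSub {X : Type*} (S : Set (X → X)) (e : X → X) : Prop :=
  ∀ β ∈ S, ∀ γ ∈ S, γ ∘ β = e

/-- `ξ(n) = max { t ^ (n - t) : 1 ≤ t ≤ n }`. -/
def xi (n : ℕ) : ℕ := (Finset.Icc 1 n).sup (fun t => t ^ (n - t))

/-- `α(n) = max { t ∈ {1,…,n} : t ^ (n - t) = ξ(n) }`. -/
def alphaMax (n : ℕ) : ℕ :=
  ((Finset.Icc 1 n).filter (fun t => t ^ (n - t) = xi n)).sup id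

open Set

section Products

variable {X : Type*} {S : Set (X → X)}

theorem foldr_comp_append (L₁ L₂ : List (X → X)) :
    (L₁ ++ L₂).foldr (· ∘ ·) id = L₁.foldr (· ∘ ·) id ∘ L₂.foldr (· ∘ ·) id := by
  induction L₁ with
  | nil => rfl
  | cons a L ih => simp only [List.cons_append, List.foldr_cons, ih]; rfl

theorem IsCommSub.comp_foldr_comp (hcomm : IsCommSub S) {β : X → X} (hβ : β ∈ S)
    {L : List (X → X)} (hL : ∀ f ∈ L, f ∈ S) :
    β ∘ L.foldr (· ∘ ·) id = L.foldr (· ∘ ·) id ∘ β := by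
  induction L with
  | nil => rfl
  | cons a L ih =>
    rw [List.forall_mem_cons] at hL
    simp only [List.foldr_cons]
    rw [← Function.comp_assoc, hcomm β hβ a hL.1, Function.comp_assoc, ih hL.2,
      Function.comp_assoc]

theorem comp_foldr_comp_of_le_length {e β : X → X} {m : ℕ} (he : IsZeroElem S e)
    (hm : ∀ L : List (X → X), L.length = m → (∀ f ∈ L, f ∈ S) → L.foldr (· ∘ ·) id = e)
    (hβ : β ∈ S) {L : List (X → X)} (hL : ∀ f ∈ L, f ∈ S) (hmL : m ≤ L.length) :
    β ∘ L.foldr (· ∘ ·) id = L.foldr (· ∘ ·) id := by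
  rw [← List.take_append_drop m L, foldr_comp_append,
    hm _ (List.length_take_of_le hmL) fun f hf => hL f (List.mem_of_mem_take hf),
    ← Function.comp_assoc, (he.2 β hβ).2]

theorem IsNilpotentSub.eq_of_comp_self {e β : X → X} (hnil : IsNilpotentSub S e) (hβ : β ∈ S)
    (hidem : β ∘ β = β) : β = e := by
  obtain ⟨m, hm, hprod⟩ := hnil
  have hpow : ∀ k, (List.replicate (k + 1) β).foldr (· ∘ ·) id = β := by
    intro k
    induction k with
    | zero => rfl
    | succ k ih => rw [List.replicate_succ, List.foldr_cons, ih, hidem]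
  obtain ⟨k, rfl⟩ : ∃ k, m = k + 1 := ⟨m - 1, by omega⟩
  rw [← hpow k]
  exact hprod _ List.length_replicate fun f hf => List.eq_of_mem_replicate hf ▸ hβ

end Products

section Image

variable {X : Type*}

def imSet (S : Set (X → X)) : Set X := ⋃ β ∈ S, range β

variable {S : Set (X → X)} {e : X → X}

theorem mem_imSet {x : X} : x ∈ imSet S ↔ ∃ β ∈ S, ∃ y, β y = x := by
  simp [imSet]

theorem apply_mem_imSet {β : X → X} (hβ : β ∈ S) (x : X) : β x ∈ imSet S :=
  mem_imSet.2 ⟨β, hβ, x, rfl⟩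

theorem eq_of_eqOn_compl_imSet (hcomm : IsCommSub S) (he : IsZeroElem S e)
    (hnil : IsNilpotentSub S e) {β₁ β₂ : X → X} (h₁ : β₁ ∈ S) (h₂ : β₂ ∈ S)
    (h : EqOn β₁ β₂ (imSet S)ᶜ) : β₁ = β₂ := by
  obtain ⟨m, -, hm⟩ := hnil
  -- induction on `m - L.length`, starting from products of length `≥ m`, which are `e`
  suffices key : ∀ k (L : List (X → X)), (∀ f ∈ L, f ∈ S) → m ≤ L.length + k →
      β₁ ∘ L.foldr (· ∘ ·) id = β₂ ∘ L.foldr (· ∘ ·) id from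
    key m [] (by simp) le_add_self
  intro k
  induction k with
  | zero =>
    intro L hL hmL
    rw [comp_foldr_comp_of_le_length he hm h₁ hL hmL,
      comp_foldr_comp_of_le_length he hm h₂ hL hmL]
  | succ k ih =>
    intro L hL hmL
    funext x
    by_cases hx : x ∈ imSet S
    · obtain ⟨δ, hδ, z, rfl⟩ := mem_imSet.1 hx
      have hLδ : ∀ f ∈ L ++ [δ], f ∈ S := by simpa [or_imp, forall_and] using ⟨hL, hδ⟩
      have := congr_fun (ih (L ++ [δ]) hLδ
        (by simp only [List.length_append, List.length_singleton]; omega)) z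
      rw [foldr_comp_append] at this
      exact this
    · calc β₁ (L.foldr (· ∘ ·) id x) = L.foldr (· ∘ ·) id (β₁ x) :=
            congr_fun (hcomm.comp_foldr_comp h₁ hL) x
        _ = L.foldr (· ∘ ·) id (β₂ x) := by rw [h hx]
        _ = β₂ (L.foldr (· ∘ ·) id x) := (congr_fun (hcomm.comp_foldr_comp h₂ hL) x).symm

def restrictCompl (S : Set (X → X)) (β : S) : ↥(imSet S)ᶜ → ↥(imSet S) :=
  fun x => ⟨β.1 x, apply_mem_imSet β.2 x⟩

theorem restrictCompl_injective (hcomm : IsCommSub S) (he : IsZeroElem S e)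
    (hnil : IsNilpotentSub S e) : Function.Injective (restrictCompl S) :=
  fun β₁ β₂ h => Subtype.ext <| eq_of_eqOn_compl_imSet hcomm he hnil β₁.2 β₂.2 fun x hx =>
    congrArg Subtype.val (congr_fun h ⟨x, hx⟩)

variable [Finite X]

theorem natCard_fun_compl_imSet :
    Nat.card (↥(imSet S)ᶜ → ↥(imSet S)) = (imSet S).ncard ^ (imSet S)ᶜ.ncard := by
  rw [Nat.card_fun, Nat.card_coe_set_eq, Nat.card_coe_set_eq]

theorem ncard_le_pow_ncard_compl (hcomm : IsCommSub S) (he : IsZeroElem S e)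
    (hnil : IsNilpotentSub S e) : S.ncard ≤ (imSet S).ncard ^ (imSet S)ᶜ.ncard := by
  rw [← natCard_fun_compl_imSet, ← Nat.card_coe_set_eq]
  exact Nat.card_le_card_of_injective _ (restrictCompl_injective hcomm he hnil)

theorem exists_eqOn_compl_imSet (hcomm : IsCommSub S) (he : IsZeroElem S e)
    (hnil : IsNilpotentSub S e) (hcard : S.ncard = (imSet S).ncard ^ (imSet S)ᶜ.ncard)
    (c : X → X) (hc : ∀ x, c x ∈ imSet S) : ∃ β ∈ S, EqOn β c (imSet S)ᶜ := by
  have hbij : Function.Bijective (restrictCompl S) := by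
    rw [Nat.bijective_iff_injective_and_card, natCard_fun_compl_imSet, Nat.card_coe_set_eq]
    exact ⟨restrictCompl_injective hcomm he hnil, hcard⟩
  obtain ⟨β, hβ⟩ := hbij.2 fun x => ⟨c x, hc x⟩
  exact ⟨β.1, β.2, fun x hx => congrArg Subtype.val (congr_fun hβ ⟨x, hx⟩)⟩

end Image

section Null

variable {X : Type*} {S : Set (X → X)} {e : X → X}

theorem isNullSub_of_forall_exists_eqOn (hcomm : IsCommSub S) (he : IsZeroElem S e)
    (hsurj : ∀ c : X → X, (∀ x, c x ∈ imSet S) → ∃ β ∈ S, EqOn β c (imSet S)ᶜ)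
    {r₀ r₁ : X} (h₀ : r₀ ∉ imSet S) (h₁ : r₁ ∉ imSet S) (hne : r₀ ≠ r₁) : IsNullSub S e := by
  classical
  have hzero : ∀ γ ∈ S, ∀ u ∈ imSet S, γ u = e u := by
    intro γ hγ u hu
    obtain ⟨δ, hδ, hδu⟩ := hsurj (fun _ => u) fun _ => hu
    obtain ⟨β, hβ, hβc⟩ := hsurj (fun x => if x = r₀ then γ r₀ else e r₁) fun x => by
      split_ifs
      exacts [apply_mem_imSet hγ _, apply_mem_imSet he.1 _]
    have hβ₀ : β r₀ = γ r₀ := by simpa using hβc h₀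
    have hβ₁ : β r₁ = e r₁ := by simpa [hne.symm] using hβc h₁
    have hδ₀ : δ r₀ = u := hδu h₀
    have hδ₁ : δ r₁ = u := hδu h₁
    calc γ u = δ (γ r₀) := by rw [← hδ₀]; exact congr_fun (hcomm γ hγ δ hδ) r₀
      _ = β u := by rw [← hβ₀, ← hδ₀]; exact congr_fun (hcomm δ hδ β hβ) r₀
      _ = δ (e r₁) := by rw [← hβ₁, ← hδ₁]; exact congr_fun (hcomm β hβ δ hδ) r₁
      _ = e r₁ := congr_fun (he.2 δ hδ).2 r₁
      _ = e u := by rw [← hδ₁]; exact (congr_fun (he.2 δ hδ).1 r₁).symm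
  intro β hβ γ hγ
  funext x
  exact (hzero γ hγ _ (apply_mem_imSet hβ x)).trans (congr_fun (he.2 β hβ).1 x)

theorem isNullSub_of_ncard_le_two [Finite X] (hS : IsTransSub S) (he : IsZeroElem S e)
    (hnil : IsNilpotentSub S e) (hcard : S.ncard ≤ 2) : IsNullSub S e := by
  have huniq : ∀ β ∈ S, ∀ γ ∈ S, β ≠ e → γ ≠ e → β = γ := by
    intro β hβ γ hγ hβe hγe
    by_contra hβγ
    have : 2 < S.ncard := (two_lt_ncard_iff S.toFinite).2
      ⟨e, β, γ, he.1, hβ, hγ, Ne.symm hβe, Ne.symm hγe, hβγ⟩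
    omega
  intro β hβ γ hγ
  by_cases hβe : β = e
  · exact hβe ▸ (he.2 γ hγ).2
  by_cases hγe : γ = e
  · exact hγe ▸ (he.2 β hβ).1
  rw [← huniq β hβ γ hγ hβe hγe]
  by_contra hββ
  exact hβe (hnil.eq_of_comp_self hβ (huniq _ (hS β hβ β hβ) β hβ hββ hβe))

end Null

section NullFamily

variable {X : Type*} {Y : Set X} {y₀ : X} {β γ : X → X}

def nullFamily (Y : Set X) (y₀ : X) : Set (X → X) := {f | (∀ y ∈ Y, f y = y₀) ∧ ∀ x, f x ∈ Y}

theorem comp_eq_const_of_mem_nullFamily (hβ : β ∈ nullFamily Y y₀) (hγ : γ ∈ nullFamily Y y₀) :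
    γ ∘ β = Function.const X y₀ :=
  funext fun x => hγ.1 _ (hβ.2 x)

theorem const_mem_nullFamily (hy₀ : y₀ ∈ Y) : Function.const X y₀ ∈ nullFamily Y y₀ :=
  ⟨fun _ _ => rfl, fun _ => hy₀⟩

theorem isTransSub_nullFamily (hy₀ : y₀ ∈ Y) : IsTransSub (nullFamily Y y₀) :=
  fun _ hβ _ hγ => comp_eq_const_of_mem_nullFamily hβ hγ ▸ const_mem_nullFamily hy₀

theorem isCommSub_nullFamily : IsCommSub (nullFamily Y y₀) := fun _ hβ _ hγ =>
  (comp_eq_const_of_mem_nullFamily hγ hβ).trans (comp_eq_const_of_mem_nullFamily hβ hγ).symm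

theorem isZeroElem_nullFamily (hy₀ : y₀ ∈ Y) :
    IsZeroElem (nullFamily Y y₀) (Function.const X y₀) :=
  ⟨const_mem_nullFamily hy₀, fun _ hβ =>
    ⟨comp_eq_const_of_mem_nullFamily hβ (const_mem_nullFamily hy₀),
      comp_eq_const_of_mem_nullFamily (const_mem_nullFamily hy₀) hβ⟩⟩

theorem isNilpotentSub_nullFamily : IsNilpotentSub (nullFamily Y y₀) (Function.const X y₀) := by
  refine ⟨2, two_pos, fun L hlen hL => ?_⟩
  obtain ⟨β, γ, rfl⟩ := List.length_eq_two.1 hlen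
  show β ∘ γ = _
  exact comp_eq_const_of_mem_nullFamily (hL γ (by simp)) (hL β (by simp))

theorem ncard_nullFamily [Finite X] (hy₀ : y₀ ∈ Y) :
    (nullFamily Y y₀).ncard = Y.ncard ^ Yᶜ.ncard := by
  classical
  let equiv : nullFamily Y y₀ ≃ (↥Yᶜ → ↥Y) :=
    { toFun := fun f x => ⟨f.1 x, f.2.2 x⟩
      invFun := fun g => ⟨fun x => if hx : x ∈ Y then y₀ else g ⟨x, hx⟩,
        fun y hy => dif_pos hy, fun x => by dsimp only; split_ifs <;> simp [hy₀]⟩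
      left_inv := fun f => Subtype.ext <| funext fun x => by
        by_cases hx : x ∈ Y
        · simp [hx, f.2.1 x hx]
        · simp [hx]
      right_inv := fun g => funext fun x => Subtype.ext <| dif_neg x.2 }
  rw [← Nat.card_coe_set_eq, Nat.card_congr equiv, Nat.card_fun, Nat.card_coe_set_eq,
    Nat.card_coe_set_eq]

end NullFamily

section Xi

theorem le_xi {n t : ℕ} (ht : 1 ≤ t) (htn : t ≤ n) : t ^ (n - t) ≤ xi n :=
  Finset.le_sup (f := fun t => t ^ (n - t)) (Finset.mem_Icc.2 ⟨ht, htn⟩)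

theorem exists_pow_eq_xi {n : ℕ} (hn : 1 ≤ n) : ∃ t, 1 ≤ t ∧ t ≤ n ∧ t ^ (n - t) = xi n := by
  obtain ⟨t, ht, hxi⟩ := Finset.exists_mem_eq_sup (Finset.Icc 1 n)
    (Finset.nonempty_Icc.2 hn) fun t => t ^ (n - t)
  exact ⟨t, (Finset.mem_Icc.1 ht).1, (Finset.mem_Icc.1 ht).2, hxi.symm⟩

theorem sub_one_lt_xi {n : ℕ} (hn : 4 ≤ n) : n - 1 < xi n := by
  refine lt_of_lt_of_le ?_ (le_xi (t := 2) one_le_two (by omega))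
  have := @Nat.lt_two_pow_self (n - 3)
  rw [show n - 2 = n - 3 + 1 by omega, pow_succ]
  omega

theorem exists_ncard_eq_xi (X : Type*) [Fintype X] [Nonempty X] :
    ∃ (T : Set (X → X)) (f : X → X), IsTransSub T ∧ IsCommSub T ∧ IsZeroElem T f ∧
      IsNilpotentSub T f ∧ T.ncard = xi (Fintype.card X) := by
  obtain ⟨t, ht, htn, hxi⟩ := exists_pow_eq_xi (Fintype.card_pos (α := X))
  obtain ⟨Y, -, hY⟩ := exists_subset_card_eq (s := (univ : Set X)) (n := t)
    (by rwa [ncard_univ, Nat.card_eq_fintype_card])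
  obtain ⟨y₀, hy₀⟩ := (ncard_pos Y.toFinite).1 (by omega)
  have hYc : Yᶜ.ncard = Fintype.card X - t := by
    rw [← hY, ← Nat.card_eq_fintype_card, ← ncard_add_ncard_compl Y]; omega
  refine ⟨nullFamily Y y₀, Function.const X y₀, isTransSub_nullFamily hy₀,
    isCommSub_nullFamily, isZeroElem_nullFamily hy₀, isNilpotentSub_nullFamily, ?_⟩
  rw [ncard_nullFamily hy₀, hY, hYc, hxi]

end Xi

theorem stmt12 {X : Type*} [Fintype X]
    (S : Set (X → X)) (hS : IsTransSub S) (hcomm : IsCommSub S)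
    (e : X → X) (he : IsZeroElem S e) (hnil : IsNilpotentSub S e)
    (hmax : ∀ (T : Set (X → X)) (f : X → X),
      IsTransSub T → IsCommSub T → IsZeroElem T f → IsNilpotentSub T f →
      T.ncard ≤ S.ncard) :
    IsNullSub S e := by
  rcases isEmpty_or_nonempty X with hX | hX
  · exact fun _ _ _ _ => funext isEmptyElim
  set A := imSet S
  have hsplit : A.ncard + Aᶜ.ncard = Fintype.card X := by
    rw [ncard_add_ncard_compl, Nat.card_eq_fintype_card]
  have hA : 0 < A.ncard :=
    (ncard_pos A.toFinite).2 ⟨_, apply_mem_imSet he.1 (Classical.arbitrary X)⟩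
  obtain ⟨T, f, hT, hTc, hTe, hTn, hTxi⟩ := exists_ncard_eq_xi X
  have hxi : xi (Fintype.card X) ≤ S.ncard := hTxi ▸ hmax T f hT hTc hTe hTn
  have hcard : S.ncard = A.ncard ^ Aᶜ.ncard := by
    refine le_antisymm (ncard_le_pow_ncard_compl hcomm he hnil) (le_trans ?_ hxi)
    rw [show Aᶜ.ncard = Fintype.card X - A.ncard by omega]
    exact le_xi hA (by omega)
  obtain hR | hR := lt_or_ge Aᶜ.ncard 2
  · refine isNullSub_of_ncard_le_two hS he hnil ?_
    interval_cases hr : Aᶜ.ncard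
    · simp [hcard]
    · rw [pow_one] at hcard
      by_contra
      have := sub_one_lt_xi (n := Fintype.card X) (by omega)
      omega
  · obtain ⟨r₀, r₁, h₀, h₁, hne⟩ := (one_lt_ncard_iff Aᶜ.toFinite).1 hR
    exact isNullSub_of_forall_exists_eqOn hcomm he
      (exists_eqOn_compl_imSet hcomm he hnil hcard) h₀ h₁ hne
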